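/- Let M be a loopless matroid of rank d+1 on a finite ground set E, and let v : E → ℝ. Then v is constant on each connected component of M if and only if for every chain F_1 ⊊ ⋯ ⊊ F_d of proper flats of M with rk_M(F_i) = i, the vector v lies in the ℝ-linear span of {1_{F_1}, …, 1_{F_d}, 1_E}. (Equivalently, the intersection of the linear spans of the maximal cones of the matroid fan Δ_M, together with 1_E, is the span of the indicator vectors of the connected components of M.) -/

import Mathlib

/-- A circuit of a matroid is a minimal dependent set. -/
def Matroid.Circuit {α : Type*} (M : Matroid α) (C : Set α) : Prop :=
  M.Dep C ∧ ∀ D ⊂ C, ¬ M.Dep D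

/-- A matroid is loopless if every singleton contained in the ground set is independent. -/
def Matroid.Loopless' {α : Type*} (M : Matroid α) : Prop :=
  ∀ e ∈ M.E, M.Indep {e}

/-- The rank of a set `X` in a matroid: the supremum of the cardinalities of the
independent sets contained in `X`. -/
noncomputable def Matroid.rk {α : Type*} (M : Matroid α) (X : Set α) : ℕ :=
  sSup {n : ℕ | ∃ I, M.Indep I ∧ I ⊆ X ∧ I.ncard = n}

/-- Two elements are connected in `M` if some circuit of `M` contains both; the
connected components of `M` are the classes of the equivalence relation this generates. -/
def Matroid.ConnectedTo {α : Type*} (M : Matroid α) (e f : α) : Prop :=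
  Relation.EqvGen (fun x y => ∃ C, M.Circuit C ∧ x ∈ C ∧ y ∈ C) e f

/-!
For a full flag `∅ = F₀ ⊊ F₁ ⊊ ⋯ ⊊ F_d ⊊ F_{d+1} = E`, any two elements `x ≠ y` of a layer
`F_{i+1} \ F_i` lie in a common circuit: for a basis `I` of `F_i`, the set `I ∪ {x, y}` exceeds
the rank of `F_{i+1}`, so `y ∈ cl (I ∪ {x}) \ cl I` and the circuit of `y` over `I ∪ {x}` contains
`x`. Hence a function constant on components is constant on every layer, and peeling off the top
layer writes it as a combination of the `1_{F_i}`.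
Conversely, if `x ≠ y` lie in a circuit `C`, extend `C \ {y}` to a base `B`: the hyperplane
`cl (B \ {x})` misses `x`, hence also `y`, so every flat of a full flag inside it contains neither,
and no vector of the span can separate `x` from `y`.
-/

open Set Submodule Matroid

section Span

variable {α R : Type*}

lemma apply_eq_of_mem_span [Semiring R] {s : Set (α → R)} {v : α → R} (hv : v ∈ span R s)
    {x y : α} (h : ∀ g ∈ s, g x = g y) : v x = v y := by
  induction hv using span_induction with
  | mem g hg => exact h g hg
  | zero => rfl
  | add f g _ _ hf hg => simp [hf, hg]
  | smul a g _ hg => simp [hg]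

lemma mem_span_indicator_of_layers [Ring R] {W : ℕ → Set α} (hW : Monotone W) (h0 : W 0 = ∅) :
    ∀ {n : ℕ} {v : α → R}, (∀ i < n, ∀ x ∈ W (i + 1) \ W i, ∀ y ∈ W (i + 1) \ W i, v x = v y) →
      (∀ x ∉ W n, v x = 0) → v ∈ span R ((fun i => (W i).indicator 1) '' Icc 1 n)
  | 0, v, _, hvn => by
    obtain rfl : v = 0 := funext fun x => hvn x (by simp [h0])
    exact zero_mem _
  | n + 1, v, hv, hvn => by
    obtain ⟨c, hc⟩ : ∃ c, ∀ x ∈ W (n + 1) \ W n, v x = c := by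
      rcases (W (n + 1) \ W n).eq_empty_or_nonempty with h | ⟨x₀, hx₀⟩
      · exact ⟨0, by simp [h]⟩
      · exact ⟨v x₀, fun x hx => hv n n.lt_succ_self x hx x₀ hx₀⟩
    have hrest : v - c • (W (n + 1)).indicator 1 ∈
        span R ((fun i => (W i).indicator (1 : α → R)) '' Icc 1 n) := by
      refine mem_span_indicator_of_layers hW h0 (fun i hi x hx y hy => ?_) (fun x hx => ?_)
      · have hW' : W (i + 1) ⊆ W (n + 1) := hW (by omega)
        simp [indicator_of_mem (hW' hx.1), indicator_of_mem (hW' hy.1), hv i (by omega) x hx y hy]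
      · by_cases hx' : x ∈ W (n + 1)
        · simp [indicator_of_mem hx', hc x ⟨hx', hx⟩]
        · simp [indicator_of_notMem hx', hvn x hx']
    have htop : (W (n + 1)).indicator 1 ∈
        span R ((fun i => (W i).indicator (1 : α → R)) '' Icc 1 (n + 1)) :=
      subset_span ⟨n + 1, by simp, rfl⟩
    simpa using add_mem (span_mono (image_mono (Icc_subset_Icc_right n.le_succ)) hrest)
      (smul_mem _ c htop)

end Span

section PadFlag

variable {α : Type*} {d : ℕ} (F : Fin d → Set α)

/-- `padFlag F i` is the flat `F_i` of the flag `F_1 ⊊ ⋯ ⊊ F_d` (stored as `F 0, …, F (d-1)`),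
with `F_0 = ∅` and `F_i = univ` for `i > d`. -/
def padFlag : ℕ → Set α
  | 0 => ∅
  | i + 1 => if h : i < d then F ⟨i, h⟩ else univ

lemma padFlag_succ_of_lt {i : ℕ} (h : i < d) : padFlag F (i + 1) = F ⟨i, h⟩ := dif_pos h

lemma padFlag_succ_of_le {i : ℕ} (h : d ≤ i) : padFlag F (i + 1) = univ :=
  dif_neg (not_lt.mpr h)

variable {F}

lemma padFlag_mono (hF : Monotone F) : Monotone (padFlag F) := by
  refine monotone_nat_of_le_succ fun i => ?_
  rcases i with _ | i
  · exact empty_subset _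
  obtain hi | hi := lt_or_ge (i + 1) d
  · rw [padFlag_succ_of_lt F hi, padFlag_succ_of_lt F (by omega)]
    exact hF (Fin.mk_le_mk.mpr i.le_succ)
  · exact (padFlag_succ_of_le F hi).symm ▸ subset_univ _

lemma indicator_padFlag_subset {R : Type*} [Zero R] [One R] (n : ℕ) :
    (fun i => (padFlag F i).indicator (1 : α → R)) '' Icc 1 n ⊆
      insert (univ.indicator 1) (range fun i => (F i).indicator 1) := by
  rintro _ ⟨_ | i, ⟨hi, -⟩, rfl⟩
  · omega
  dsimp only
  obtain hi | hi := lt_or_ge i d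
  · exact mem_insert_of_mem _ ⟨⟨i, hi⟩, by rw [padFlag_succ_of_lt F hi]⟩
  · rw [padFlag_succ_of_le F hi]; exact mem_insert _ _

end PadFlag

namespace Matroid

variable {α : Type*} {M : Matroid α} {B C I J P Q X : Set α} {x y : α}

lemma circuit_iff_isCircuit : M.Circuit C ↔ M.IsCircuit C := by
  rw [isCircuit_iff_forall_ssubset, Circuit]
  refine and_congr_right fun hC => forall₂_congr fun D hDC => ?_
  rw [not_dep_iff (hDC.subset.trans hC.subset_ground)]

lemma Loopless'.loopless (h : M.Loopless') : M.Loopless :=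
  loopless_iff_forall_isNonloop.mpr fun e he => indep_singleton.mp (h e he)

lemma IsCircuit.connectedTo (hC : M.IsCircuit C) (hx : x ∈ C) (hy : y ∈ C) :
    M.ConnectedTo x y :=
  .rel x y ⟨C, circuit_iff_isCircuit.mpr hC, hx, hy⟩

lemma ConnectedTo.apply_eq {β : Type*} {f : α → β}
    (hf : ∀ C, M.IsCircuit C → ∀ x ∈ C, ∀ y ∈ C, f x = f y) (h : M.ConnectedTo x y) :
    f x = f y :=
  Setoid.eqvGen_le (s := Setoid.ker f)
    (fun _ _ ⟨C, hC, hx, hy⟩ => hf C (circuit_iff_isCircuit.mp hC) _ hx _ hy) h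

lemma IsCircuit.exists_isBase_notMem_closure (hC : M.IsCircuit C) (hx : x ∈ C) (hy : y ∈ C)
    (hxy : x ≠ y) : ∃ B, M.IsBase B ∧ x ∈ B ∧ y ∉ M.closure (B \ {x}) := by
  obtain ⟨B, hB, hCB⟩ := (hC.sdiff_singleton_indep hy).exists_isBase_superset
  have hxB : x ∈ B := hCB ⟨hx, hxy⟩
  refine ⟨B, hB, hxB, fun hyB => hB.indep.notMem_closure_sdiff_of_mem hxB ?_⟩
  have hC_sub : C \ {x} ⊆ M.closure (B \ {x}) := by
    rintro z ⟨hzC, hzx⟩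
    obtain rfl | hzy := eq_or_ne z y
    · exact hyB
    · exact M.subset_closure _ (sdiff_subset.trans hB.subset_ground) ⟨hCB ⟨hzC, hzy⟩, hzx⟩
  exact closure_subset_closure_of_subset_closure hC_sub (hC.mem_closure_sdiff_singleton_of_mem hx)

section RankFinite

variable [M.RankFinite]

lemma IsBasis'.ncard_le_of_indep (hI : M.IsBasis' I X) (hJ : M.Indep J) (hJX : J ⊆ X) :
    J.ncard ≤ I.ncard := by
  obtain ⟨J', hJ', hJJ'⟩ := hJ.subset_isBasis'_of_subset hJX
  rw [ncard_def I, ← hJ'.encard_eq_encard hI, ← ncard_def]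
  exact ncard_le_ncard hJJ' hJ'.indep.finite

lemma IsBasis'.rk_eq_ncard (hI : M.IsBasis' I X) : M.rk X = I.ncard :=
  IsGreatest.csSup_eq ⟨⟨I, hI.indep, hI.subset, rfl⟩,
    fun _ ⟨_, hJ, hJX, hn⟩ => hn ▸ hI.ncard_le_of_indep hJ hJX⟩

lemma Indep.ncard_le_rk (hJ : M.Indep J) (hJX : J ⊆ X) : J.ncard ≤ M.rk X := by
  obtain ⟨I, hI⟩ := M.exists_isBasis' X
  exact hI.rk_eq_ncard ▸ hI.ncard_le_of_indep hJ hJX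

lemma Indep.rk_closure_eq_ncard (hI : M.Indep I) : M.rk (M.closure I) = I.ncard :=
  hI.isBasis_closure.isBasis'.rk_eq_ncard

lemma IsFlat.connectedTo_of_mem_diff (hP : M.IsFlat P) (hPQ : P ⊆ Q) (hQE : Q ⊆ M.E)
    (hrk : M.rk Q = M.rk P + 1) (hx : x ∈ Q \ P) (hy : y ∈ Q \ P) : M.ConnectedTo x y := by
  obtain rfl | hxy := eq_or_ne x y
  · exact .refl x
  obtain ⟨I, hI⟩ := M.exists_isBasis P
  have hIP : M.closure I = P := by rw [hI.closure_eq_closure, hP.closure]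
  obtain ⟨hxI, -⟩ := (hI.indep.notMem_closure_iff (hQE hx.1)).mp (hIP ▸ hx.2)
  obtain ⟨hyI, hyI'⟩ := (hI.indep.notMem_closure_iff (hQE hy.1)).mp (hIP ▸ hy.2)
  have hy_cl : y ∈ M.closure (insert x I) := by
    by_contra hy_cl
    obtain ⟨hyxI, hyx⟩ := (hxI.notMem_closure_iff (hQE hy.1)).mp hy_cl
    have := hyxI.ncard_le_rk (insert_subset hy.1 (insert_subset hx.1 (hI.subset.trans hPQ)))
    rw [ncard_insert_of_notMem hyx hxI.finite,
      ncard_insert_of_notMem (notMem_subset hI.subset hx.2) hI.indep.finite, hrk,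
      hI.isBasis'.rk_eq_ncard] at this
    omega
  obtain ⟨C, hCI, hC, hyC⟩ := exists_isCircuit_of_mem_closure hy_cl (by simp [hxy.symm, hyI'])
  refine hC.connectedTo (by_contra fun hxC => hC.not_indep (hyI.subset fun z hz => ?_)) hyC
  obtain rfl | rfl | hzI := hCI hz
  exacts [mem_insert _ _, absurd hz hxC, mem_insert_of_mem _ hzI]

lemma Indep.exists_flag {n : ℕ} (hJ : M.Indep J) (hn : J.ncard = n) :
    ∃ G : Fin n → Set α, StrictMono G ∧ (∀ i, M.IsFlat (G i)) ∧
      (∀ i : Fin n, M.rk (G i) = i + 1) ∧ ∀ i, G i ⊆ M.closure J := by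
  have := hJ.finite.to_subtype
  let e : J ≃ Fin n := Finite.equivFinOfCardEq (by rwa [Nat.card_coe_set_eq])
  let b : Fin n → α := fun i => e.symm i
  have hb : b.Injective := Subtype.val_injective.comp e.symm.injective
  have hbJ : ∀ s, b '' s ⊆ J := by rintro s _ ⟨i, -, rfl⟩; exact (e.symm i).2
  have hrk : ∀ i : Fin n, M.rk (M.closure (b '' Iic i)) = i + 1 := fun i => by
    rw [(hJ.subset (hbJ _)).rk_closure_eq_ncard, ncard_image_of_injective _ hb,
      ncard_eq_toFinset_card', toFinset_Iic, Fin.card_Iic]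
  refine ⟨fun i => M.closure (b '' Iic i), Monotone.strictMono_of_injective
    (fun i j hij => M.closure_subset_closure (image_mono (Iic_subset_Iic.mpr hij)))
    (fun i j hij => Fin.ext (by simpa [hrk] using congrArg M.rk hij)),
    fun _ => M.isFlat_closure _, hrk, fun _ => M.closure_subset_closure (hbJ _)⟩

lemma IsCircuit.exists_flag_avoiding {d : ℕ} (hrk : M.rk M.E = d + 1) (hC : M.IsCircuit C)
    (hx : x ∈ C) (hy : y ∈ C) (hxy : x ≠ y) :
    ∃ G : Fin d → Set α, StrictMono G ∧ (∀ i, M.IsFlat (G i)) ∧ (∀ i, G i ≠ M.E) ∧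
      (∀ i : Fin d, M.rk (G i) = i + 1) ∧ ∀ i, x ∉ G i ∧ y ∉ G i := by
  obtain ⟨B, hB, hxB, hyB⟩ := hC.exists_isBase_notMem_closure hx hy hxy
  have hBx : (B \ {x}).ncard = d := by
    have := hB.isBasis_ground.isBasis'.rk_eq_ncard
    rw [ncard_sdiff_singleton_of_mem hxB]
    omega
  obtain ⟨G, hGmono, hGflat, hGrk, hGB⟩ := (hB.indep.sdiff {x}).exists_flag hBx
  refine ⟨G, hGmono, hGflat, fun i hi => ?_, hGrk, fun i =>
    ⟨fun hxG => hB.indep.notMem_closure_sdiff_of_mem hxB (hGB i hxG), fun hyG => hyB (hGB i hyG)⟩⟩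
  have := hGrk i
  rw [hi, hrk] at this
  omega

lemma rk_padFlag {d : ℕ} {F : Fin d → Set α} (hE : M.E = univ) (hrk : M.rk M.E = d + 1)
    (hF : ∀ i : Fin d, M.rk (F i) = i + 1) {i : ℕ} (hi : i ≤ d + 1) : M.rk (padFlag F i) = i := by
  rcases i with _ | i
  · exact M.empty_indep.isBasis_self.isBasis'.rk_eq_ncard.trans (ncard_empty α)
  obtain hi | hi := lt_or_ge i d
  · rw [padFlag_succ_of_lt F hi, hF]
  · rw [padFlag_succ_of_le F hi, ← hE, hrk]; omega

end RankFinite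

lemma isFlat_padFlag [M.Loopless] {d : ℕ} {F : Fin d → Set α} (hE : M.E = univ)
    (hF : ∀ i, M.IsFlat (F i)) : ∀ i, M.IsFlat (padFlag F i)
  | 0 => by simpa [padFlag, closure_empty, loops_eq_empty] using M.isFlat_closure ∅
  | i + 1 => by
    obtain hi | hi := lt_or_ge i d
    · exact padFlag_succ_of_lt F hi ▸ hF _
    · exact padFlag_succ_of_le F hi ▸ hE ▸ M.ground_isFlat

end Matroid

/-- Let `M` be a loopless matroid of rank `d + 1` on a finite ground
set `E` (taken to be all of `α`) and let `v : E → ℝ`.  Then `v` is constant on each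
connected component of `M` if and only if for every full flag `F 0 ⊊ ⋯ ⊊ F (d-1)` of
proper flats with `rk (F i) = i + 1`, the vector `v` lies in the `ℝ`-linear span of the
indicator vectors of the flats of the flag together with the indicator vector of `E`. -/
theorem constant_on_components_iff_mem_span_of_flags
    {α : Type*} {M : Matroid α} (hground : M.E = Set.univ) (hfin : M.E.Finite)
    (hloop : M.Loopless') {d : ℕ} (hrk : M.rk M.E = d + 1) (v : α → ℝ) :
    (∀ e f, M.ConnectedTo e f → v e = v f) ↔
    (∀ F : Fin d → Set α, StrictMono F → (∀ i, M.IsFlat (F i)) → (∀ i, F i ≠ M.E) →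
      (∀ i : Fin d, M.rk (F i) = (i : ℕ) + 1) →
      v ∈ Submodule.span ℝ (insert (Set.indicator M.E (1 : α → ℝ))
        (Set.range fun i => Set.indicator (F i) (1 : α → ℝ)))) := by
  have : M.Finite := ⟨hfin⟩
  have : M.Loopless := hloop.loopless
  constructor
  · intro hv F hF hflat _ hrkF
    rw [hground]
    refine span_mono (indicator_padFlag_subset (d + 1)) (mem_span_indicator_of_layers
      (padFlag_mono hF.monotone) rfl (fun i hi x hx y hy => hv x y ?_)
      (fun x hx => absurd (padFlag_succ_of_le F le_rfl ▸ mem_univ x) hx))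
    refine (isFlat_padFlag hground hflat i).connectedTo_of_mem_diff
      (padFlag_mono hF.monotone i.le_succ) (hground ▸ subset_univ _) ?_ hx hy
    rw [rk_padFlag hground hrk hrkF hi, rk_padFlag hground hrk hrkF (by omega)]
  · intro h e f hef
    refine hef.apply_eq fun C hC x hx y hy => ?_
    obtain rfl | hxy := eq_or_ne x y
    · rfl
    obtain ⟨G, hGmono, hGflat, hGE, hGrk, hG⟩ := hC.exists_flag_avoiding hrk hx hy hxy
    refine apply_eq_of_mem_span (h G hGmono hGflat hGE hGrk) ?_
    rintro _ (rfl | ⟨i, rfl⟩)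
    · simp [hground]
    · simp [indicator_of_notMem (hG i).1, indicator_of_notMem (hG i).2]
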